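/- For every z ∈ ℂ with Im z ≠ 0, the Stieltjes transform m(z) of the semicircle law satisfies |m(z)| < 1. -/

import Mathlib

open MeasureTheory Real Complex intervalIntegral

lemma exp_I_ne (q : ℂ) (hq : ‖q‖ < 1) (w : ℂ) (hw : ‖w‖ = 1) :
    1 - q * w ∈ Complex.slitPlane := by
  left
  have h1 : ‖q * w‖ < 1 := by rw [norm_mul, hw, mul_one]; exact hq
  have h2 : |(q * w).re| ≤ ‖q * w‖ := Complex.abs_re_le_norm _
  simp only [Complex.sub_re, Complex.one_re]
  cases' abs_le.1 h2 with h3 h4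
  linarith

lemma one_sub_ne (q : ℂ) (hq : ‖q‖ < 1) (w : ℂ) (hw : ‖w‖ = 1) :
    1 - q * w ≠ 0 :=
  Complex.slitPlane_ne_zero (exp_I_ne q hq w hw)

lemma norm_exp_I (θ : ℝ) : ‖Complex.exp (θ * Complex.I)‖ = 1 := by
  simpa using Complex.abs_exp_ofReal_mul_I θ

lemma norm_exp_neg_I (θ : ℝ) : ‖Complex.exp (-(θ * Complex.I))‖ = 1 := by
  simpa using Complex.norm_exp_ofReal_mul_I (-θ)

lemma exp_tpi : Complex.exp (((2 * π : ℝ) : ℂ) * Complex.I) = 1 := by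
  push_cast
  exact Complex.exp_two_pi_mul_I

lemma intE1 : ∫ θ in (0:ℝ)..2*π, Complex.exp (θ * Complex.I) = 0 := by
  have : ∀ θ : ℝ, Complex.exp ((θ:ℂ) * Complex.I) = Complex.exp (Complex.I * θ) := by
    intro θ; rw [mul_comm]
  simp_rw [this]
  rw [integral_exp_mul_complex Complex.I_ne_zero]
  rw [mul_comm Complex.I _, mul_comm Complex.I _]
  push_cast
  rw [Complex.exp_two_pi_mul_I]
  simp

lemma intE2 : ∫ θ in (0:ℝ)..2*π, Complex.exp (-((θ:ℂ) * Complex.I)) = 0 := by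
  have : ∀ θ : ℝ, Complex.exp (-((θ:ℂ) * Complex.I)) = Complex.exp (-Complex.I * θ) := by
    intro θ; ring_nf
  simp_rw [this]
  rw [integral_exp_mul_complex (neg_ne_zero.2 Complex.I_ne_zero)]
  have : (-Complex.I) * ((2*π : ℝ):ℂ) = (-1 : ℤ) * (2 * π * Complex.I) := by push_cast; ring
  rw [this, Complex.exp_int_mul_two_pi_mul_I]
  simp

lemma deriv_exp_I (θ : ℝ) :
    HasDerivAt (fun t : ℝ => Complex.exp ((t:ℂ) * Complex.I))
      (Complex.exp ((θ:ℂ) * Complex.I) * Complex.I) θ := by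
  have h : HasDerivAt (fun w : ℂ => Complex.exp (w * Complex.I))
      (Complex.exp ((θ:ℂ) * Complex.I) * Complex.I) (θ:ℂ) := by
    have h1 : HasDerivAt (fun w : ℂ => w * Complex.I) Complex.I (θ:ℂ) := by
      simpa using (hasDerivAt_id ((θ:ℝ):ℂ)).mul_const Complex.I
    exact (Complex.hasDerivAt_exp _).comp _ h1
  exact h.comp_ofReal

lemma intA (q : ℂ) (hq : ‖q‖ < 1) :
    ∫ θ in (0:ℝ)..2*π, (1 - q * Complex.exp ((θ:ℂ) * Complex.I))⁻¹ = 2*π := by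
  set f : ℝ → ℂ := fun θ => θ + Complex.I * Complex.log (1 - q * Complex.exp ((θ:ℂ) * Complex.I))
    with hf
  have hne : ∀ θ : ℝ, 1 - q * Complex.exp ((θ:ℂ) * Complex.I) ≠ 0 := fun θ =>
    one_sub_ne q hq _ (norm_exp_I θ)
  have hD : ∀ θ : ℝ, HasDerivAt f (1 - q * Complex.exp ((θ:ℂ) * Complex.I))⁻¹ θ := by
    intro θ
    have h1 : HasDerivAt (fun t : ℝ => 1 - q * Complex.exp ((t:ℂ) * Complex.I))
        (-(q * (Complex.exp ((θ:ℂ) * Complex.I) * Complex.I))) θ := by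
      simpa using (((deriv_exp_I θ).const_mul q).const_sub 1)
    have h2 : HasDerivAt (fun t : ℝ =>
        Complex.log (1 - q * Complex.exp ((t:ℂ) * Complex.I)))
        ((-(q * (Complex.exp ((θ:ℂ) * Complex.I) * Complex.I))) /
          (1 - q * Complex.exp ((θ:ℂ) * Complex.I))) θ :=
      h1.clog_real (exp_I_ne q hq _ (norm_exp_I θ))
    have h3 : HasDerivAt (fun t : ℝ => ((t:ℝ):ℂ)) 1 θ := Complex.ofRealCLM.hasDerivAt
    have := (h3.add (h2.const_mul Complex.I))
    convert this using 1
    · rfl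
    · rfl
    have hne' := hne θ
    field_simp
    ring_nf
    rw [Complex.I_sq]
    ring
  rw [integral_eq_sub_of_hasDerivAt (fun θ _ => hD θ)]
  · rw [hf]
    simp only
    rw [exp_tpi]
    simp
  · apply Continuous.intervalIntegrable
    exact (continuous_const.sub (continuous_const.mul
      (Complex.continuous_exp.comp (Complex.continuous_ofReal.mul continuous_const)))).inv₀
      hne

lemma deriv_exp_c (c : ℂ) (θ : ℝ) :
    HasDerivAt (fun t : ℝ => Complex.exp ((t:ℂ) * c))
      (Complex.exp ((θ:ℂ) * c) * c) θ := by
  have h : HasDerivAt (fun w : ℂ => Complex.exp (w * c))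
      (Complex.exp ((θ:ℂ) * c) * c) (θ:ℂ) := by
    have h1 : HasDerivAt (fun w : ℂ => w * c) c (θ:ℂ) := by
      simpa using (hasDerivAt_id ((θ:ℝ):ℂ)).mul_const c
    exact (Complex.hasDerivAt_exp _).comp _ h1
  exact h.comp_ofReal

lemma intB (q : ℂ) (hq : ‖q‖ < 1) :
    ∫ θ in (0:ℝ)..2*π,
      Complex.exp (-((θ:ℂ) * Complex.I)) *
        (1 - q * Complex.exp (-((θ:ℂ) * Complex.I)))⁻¹ = 0 := by
  rcases eq_or_ne q 0 with rfl | hq0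
  · simpa using intE2
  have hrw : ∀ θ : ℝ, Complex.exp (-((θ:ℂ) * Complex.I)) = Complex.exp ((θ:ℂ) * (-Complex.I)) := by
    intro θ; ring_nf
  have hne : ∀ θ : ℝ, 1 - q * Complex.exp ((θ:ℂ) * (-Complex.I)) ≠ 0 := by
    intro θ
    apply one_sub_ne q hq
    rw [← hrw]; exact norm_exp_neg_I θ
  set f : ℝ → ℂ := fun θ =>
    Complex.I⁻¹ * q⁻¹ * Complex.log (1 - q * Complex.exp ((θ:ℂ) * (-Complex.I))) with hf
  have hD : ∀ θ : ℝ, HasDerivAt f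
      (Complex.exp ((θ:ℂ) * (-Complex.I)) *
        (1 - q * Complex.exp ((θ:ℂ) * (-Complex.I)))⁻¹) θ := by
    intro θ
    have h1 : HasDerivAt (fun t : ℝ => 1 - q * Complex.exp ((t:ℂ) * (-Complex.I)))
        (-(q * (Complex.exp ((θ:ℂ) * (-Complex.I)) * (-Complex.I)))) θ := by
      simpa using (((deriv_exp_c (-Complex.I) θ).const_mul q).const_sub 1)
    have hsp : 1 - q * Complex.exp ((θ:ℂ) * (-Complex.I)) ∈ Complex.slitPlane := by
      apply exp_I_ne q hq
      rw [← hrw]; exact norm_exp_neg_I θ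
    have h2 := (h1.clog_real hsp).const_mul (Complex.I⁻¹ * q⁻¹)
    have hne' := hne θ
    have hval : Complex.I⁻¹ * q⁻¹ *
        (-(q * (Complex.exp ((θ:ℂ) * (-Complex.I)) * (-Complex.I))) /
          (1 - q * Complex.exp ((θ:ℂ) * (-Complex.I))))
        = Complex.exp ((θ:ℂ) * (-Complex.I)) *
            (1 - q * Complex.exp ((θ:ℂ) * (-Complex.I)))⁻¹ := by
      rw [Complex.inv_I]
      field_simp
      have hI : -(Complex.I * (q * (Complex.exp (-((θ:ℂ) * Complex.I)) * Complex.I)))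
          = q * Complex.exp (-((θ:ℂ) * Complex.I)) := by
        linear_combination (-(q * Complex.exp (-((θ:ℂ) * Complex.I)))) * Complex.I_sq
      rw [Complex.I_sq]
      ring
    rw [hval] at h2
    exact h2
  simp_rw [hrw]
  rw [integral_eq_sub_of_hasDerivAt (fun θ _ => hD θ)]
  · rw [hf]
    simp only
    have h2 : ((2*π:ℝ):ℂ) * (-Complex.I) = (-1 : ℤ) * (2 * π * Complex.I) := by push_cast; ring
    rw [h2, Complex.exp_int_mul_two_pi_mul_I]
    simp
  · apply Continuous.intervalIntegrable
    exact ((Complex.continuous_exp.comp (Complex.continuous_ofReal.mul continuous_const))).mul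
      ((continuous_const.sub (continuous_const.mul
        (Complex.continuous_exp.comp (Complex.continuous_ofReal.mul continuous_const)))).inv₀
        hne)

lemma denom_ne (r : ℂ) (hr : 1 < ‖r‖) (θ : ℝ) :
    2*(Real.cos θ:ℂ) - (r + r⁻¹) ≠ 0 := by
  have hr0 : r ≠ 0 := by intro h; rw [h] at hr; simp at hr; linarith
  set u := Complex.exp ((θ:ℂ)*Complex.I) with hu
  set v := Complex.exp (-((θ:ℂ)*Complex.I)) with hv
  have huv : u * v = 1 := by rw [hu, hv, ← Complex.exp_add]; simp
  have hcos : (Real.cos θ : ℂ) = (u + v)/2 := by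
    rw [Complex.ofReal_cos]
    have h2 := Complex.two_cos (θ:ℂ)
    rw [neg_mul] at h2
    rw [hu, hv]
    linear_combination h2 / 2
  intro h
  rw [hcos] at h
  have heq : u + v = r + r⁻¹ := by linear_combination h
  have hrr : r * r⁻¹ = 1 := mul_inv_cancel₀ hr0
  have hfac : (u - r) * (u - r⁻¹) = 0 := by linear_combination u * heq - huv + hrr
  have hnu : ‖u‖ = 1 := norm_exp_I θ
  rcases mul_eq_zero.1 hfac with h1 | h1
  · have : u = r := by linear_combination h1
    rw [this] at hnu; rw [hnu] at hr; linarith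
  · have : u = r⁻¹ := by linear_combination h1
    have : ‖r⁻¹‖ < 1 := by
      rw [norm_inv]; rw [inv_lt_one_iff₀]; right; exact hr
    rw [← ‹u = r⁻¹›] at this; rw [hnu] at this; linarith

lemma alg (u v r s : ℂ) (huv : u*v = 1) (hrs : r*s = 1)
    (d4 : r - u ≠ 0) (d5 : u*r - 1 ≠ 0) :
    ((v - u)*Complex.I/2)^2 / (2*((u+v)/2) - (r+s)) =
      (-1/4 : ℂ) * u + (-(r+s)/4) + (-1/4) * v
      + ((r^2-1)/(4*r)) * (r / (r - u))
      + (-(s^2-1)/4) * (v * (u * r / (u * r - 1))) := by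
  have hu0 : u ≠ 0 := left_ne_zero_of_mul_eq_one huv
  have hv0 : v ≠ 0 := right_ne_zero_of_mul_eq_one huv
  have hr0 : r ≠ 0 := left_ne_zero_of_mul_eq_one hrs
  have hs0 : s ≠ 0 := right_ne_zero_of_mul_eq_one hrs
  have d5' : (1:ℂ) - u*r ≠ 0 := by intro h; apply d5; linear_combination -h
  have hI : ((v - u)*Complex.I/2)^2 = -((v-u)/2)^2 := by
    rw [div_pow, mul_pow, Complex.I_sq]; ring
  have hfac : 2*((u+v)/2) - (r+s) = (r-u)*(1-u*r)*(v*s) := by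
    linear_combination (r - u - v)*hrs + (s + r^2*s - u*r*s)*huv
  have t4 : ((r^2-1)/(4*r)) * (r / (r - u)) = (r^2-1)/(4*(r-u)) := by
    rw [div_mul_div_comm, show (4*r)*(r-u) = (4*(r-u))*r by ring,
      mul_div_mul_right _ _ hr0]
  have t5 : (-(s^2-1)/4) * (v * (u * r / (u * r - 1)))
      = (-(s^2-1)*(v*(u*r)))/(4*(u*r-1)) := by
    rw [mul_div_assoc', div_mul_div_comm]
  have hB : (r-u)*(1-u*r)*(v*s) ≠ 0 :=
    mul_ne_zero (mul_ne_zero d4 d5') (mul_ne_zero hv0 hs0)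
  rw [hI, hfac, t4, t5, div_eq_iff hB, add_mul, add_mul, add_mul, add_mul]
  rw [show (r^2-1)/(4*(r-u)) * ((r-u)*(1-u*r)*(v*s))
      = ((r^2-1)*((1-u*r)*(v*s)))/4 by
    rw [div_mul_eq_mul_div,
      show (r^2-1)*((r-u)*(1-u*r)*(v*s)) = ((r^2-1)*((1-u*r)*(v*s)))*(r-u) by ring,
      show (4:ℂ)*(r-u) = 4*(r-u) by ring, mul_div_mul_right _ _ d4]]
  rw [show (-(s^2-1)*(v*(u*r)))/(4*(u*r-1)) * ((r-u)*(1-u*r)*(v*s))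
      = (-((-(s^2-1)*(v*(u*r)))*((r-u)*(v*s))))/4 by
    rw [div_mul_eq_mul_div,
      show (-(s^2-1)*(v*(u*r)))*((r-u)*(1-u*r)*(v*s))
        = (-((-(s^2-1)*(v*(u*r)))*((r-u)*(v*s))))*(u*r-1) by ring,
      mul_div_mul_right _ _ d5]]
  linear_combination
    ((1:ℂ)/2 - s^2/4 - r*s/4 + r*s^3/4 - r^2*s^2/4 - v*s/4 - v*r^2*s^3/4 - u*s/4
      + u*r*s^2/4 + u*v*r*s^3/4 + u^2*r*s/4) * huv
    + (-(1:ℂ)/2 + s^2/4 - r*s/4 - v*r*s^2/4 + v^2/4 + u*s/4 + u^2/4) * hrs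

lemma hpt (r : ℂ) (hr : 1 < ‖r‖) (θ : ℝ) :
    (Real.sin θ : ℂ)^2 / (2*(Real.cos θ:ℂ) - (r + r⁻¹)) =
      (-1/4 : ℂ) * Complex.exp ((θ:ℂ)*Complex.I)
      + (-(r+r⁻¹)/4)
      + (-1/4) * Complex.exp (-((θ:ℂ)*Complex.I))
      + ((r^2-1)/(4*r)) * (1 - r⁻¹ * Complex.exp ((θ:ℂ)*Complex.I))⁻¹
      + (-((r⁻¹)^2-1)/4) *
          (Complex.exp (-((θ:ℂ)*Complex.I)) *
            (1 - r⁻¹ * Complex.exp (-((θ:ℂ)*Complex.I)))⁻¹) := by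
  have hr0 : r ≠ 0 := by intro h; rw [h] at hr; simp at hr; linarith
  set u := Complex.exp ((θ:ℂ)*Complex.I) with hu
  set v := Complex.exp (-((θ:ℂ)*Complex.I)) with hv
  have hu0 : u ≠ 0 := Complex.exp_ne_zero _
  have huv : u * v = 1 := by rw [hu, hv, ← Complex.exp_add]; simp
  have hrs : r * r⁻¹ = 1 := mul_inv_cancel₀ hr0
  have hnu : ‖u‖ = 1 := norm_exp_I θ
  have d4 : r - u ≠ 0 := by
    rw [sub_ne_zero]
    intro h
    rw [h] at hr
    linarith
  have d5 : u * r - 1 ≠ 0 := by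
    intro h
    have : ‖u * r‖ = 1 := by rw [show u * r = 1 by linear_combination h]; simp
    rw [norm_mul, hnu, one_mul] at this
    linarith
  have hsin : (Real.sin θ : ℂ) = (v - u) * Complex.I / 2 := by
    rw [Complex.ofReal_sin]
    have h2 := Complex.two_sin (θ:ℂ)
    rw [neg_mul] at h2
    rw [hu, hv]
    linear_combination h2 / 2
  have hcos : (Real.cos θ : ℂ) = (u + v)/2 := by
    rw [Complex.ofReal_cos]
    have h2 := Complex.two_cos (θ:ℂ)
    rw [neg_mul] at h2
    rw [hu, hv]
    linear_combination h2 / 2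
  have e1 : (1 - r⁻¹ * u)⁻¹ = r / (r - u) := by
    rw [show (1:ℂ) - r⁻¹ * u = (r - u) / r by
      rw [eq_div_iff hr0]; linear_combination (-u)*hrs, inv_div]
  have e2 : (1 - r⁻¹ * v)⁻¹ = u * r / (u * r - 1) := by
    rw [show (1:ℂ) - r⁻¹ * v = (u * r - 1) / (u * r) by
      rw [eq_div_iff (mul_ne_zero hu0 hr0)]
      linear_combination (-(r*r⁻¹))*huv - hrs, inv_div]
  rw [hsin, hcos, e1, e2]
  exact alg u v r r⁻¹ huv hrs d4 d5

lemma cE1 : Continuous fun θ : ℝ => Complex.exp ((θ:ℂ) * Complex.I) :=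
  Complex.continuous_exp.comp (Complex.continuous_ofReal.mul continuous_const)

lemma cE2 : Continuous fun θ : ℝ => Complex.exp (-((θ:ℂ) * Complex.I)) :=
  Complex.continuous_exp.comp (Complex.continuous_ofReal.mul continuous_const).neg

lemma int_h (r : ℂ) (hr : 1 < ‖r‖) :
    (∫ θ in (0:ℝ)..2*π, (Real.sin θ : ℂ)^2 / (2*(Real.cos θ:ℂ) - (r + r⁻¹)))
      = -(π:ℂ)/r := by
  have hr0 : r ≠ 0 := by intro h; rw [h] at hr; simp at hr; linarith
  have hri : ‖r⁻¹‖ < 1 := by rw [norm_inv, inv_lt_one_iff₀]; right; exact hr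
  have c4 : Continuous fun θ : ℝ => (1 - r⁻¹ * Complex.exp ((θ:ℂ) * Complex.I))⁻¹ :=
    (continuous_const.sub (continuous_const.mul cE1)).inv₀
      (fun θ => one_sub_ne r⁻¹ hri _ (norm_exp_I θ))
  have c5 : Continuous fun θ : ℝ =>
      Complex.exp (-((θ:ℂ) * Complex.I)) *
        (1 - r⁻¹ * Complex.exp (-((θ:ℂ) * Complex.I)))⁻¹ :=
    cE2.mul ((continuous_const.sub (continuous_const.mul cE2)).inv₀
      (fun θ => one_sub_ne r⁻¹ hri _ (norm_exp_neg_I θ)))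
  have i1 : IntervalIntegrable (fun θ : ℝ => (-1/4 : ℂ) * Complex.exp ((θ:ℂ)*Complex.I))
      volume 0 (2*π) := (continuous_const.mul cE1).intervalIntegrable _ _
  have i2 : IntervalIntegrable (fun _ : ℝ => (-(r+r⁻¹)/4 : ℂ)) volume 0 (2*π) :=
    continuous_const.intervalIntegrable _ _
  have i3 : IntervalIntegrable (fun θ : ℝ => (-1/4 : ℂ) * Complex.exp (-((θ:ℂ)*Complex.I)))
      volume 0 (2*π) := (continuous_const.mul cE2).intervalIntegrable _ _
  have i4 : IntervalIntegrable (fun θ : ℝ =>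
      ((r^2-1)/(4*r)) * (1 - r⁻¹ * Complex.exp ((θ:ℂ)*Complex.I))⁻¹) volume 0 (2*π) :=
    (continuous_const.mul c4).intervalIntegrable _ _
  have i5 : IntervalIntegrable (fun θ : ℝ =>
      (-((r⁻¹)^2-1)/4) * (Complex.exp (-((θ:ℂ)*Complex.I)) *
        (1 - r⁻¹ * Complex.exp (-((θ:ℂ)*Complex.I)))⁻¹)) volume 0 (2*π) :=
    (continuous_const.mul c5).intervalIntegrable _ _
  rw [intervalIntegral.integral_congr (g := fun θ : ℝ =>
      (-1/4 : ℂ) * Complex.exp ((θ:ℂ)*Complex.I)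
      + (-(r+r⁻¹)/4)
      + (-1/4) * Complex.exp (-((θ:ℂ)*Complex.I))
      + ((r^2-1)/(4*r)) * (1 - r⁻¹ * Complex.exp ((θ:ℂ)*Complex.I))⁻¹
      + (-((r⁻¹)^2-1)/4) *
          (Complex.exp (-((θ:ℂ)*Complex.I)) *
            (1 - r⁻¹ * Complex.exp (-((θ:ℂ)*Complex.I)))⁻¹))
    (fun θ _ => hpt r hr θ)]
  rw [intervalIntegral.integral_add (((i1.add i2).add i3).add i4) i5,
    intervalIntegral.integral_add ((i1.add i2).add i3) i4,
    intervalIntegral.integral_add (i1.add i2) i3,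
    intervalIntegral.integral_add i1 i2]
  rw [intervalIntegral.integral_const_mul, intervalIntegral.integral_const_mul,
    intervalIntegral.integral_const_mul, intervalIntegral.integral_const_mul,
    intervalIntegral.integral_const]
  rw [intE1, intE2, intA r⁻¹ hri, intB r⁻¹ hri]
  rw [sub_zero, Complex.real_smul]
  push_cast
  have hpi : (π:ℂ) ≠ 0 := by
    exact_mod_cast Complex.ofReal_ne_zero.2 Real.pi_ne_zero
  field_simp
  ring

lemma h_cont (r : ℂ) (hr : 1 < ‖r‖) :
    Continuous (fun θ : ℝ => (Real.sin θ:ℂ)^2 / (2*(Real.cos θ:ℂ) - (r + r⁻¹))) := by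
  apply Continuous.div
  · exact (Complex.continuous_ofReal.comp Real.continuous_sin).pow 2
  · exact (continuous_const.mul (Complex.continuous_ofReal.comp Real.continuous_cos)).sub
      continuous_const
  · exact fun θ => denom_ne r hr θ

lemma int_h_half (r : ℂ) (hr : 1 < ‖r‖) :
    (∫ θ in (0:ℝ)..π, (Real.sin θ:ℂ)^2 / (2*(Real.cos θ:ℂ) - (r + r⁻¹)))
      = -(π:ℂ)/(2*r) := by
  have hcont := h_cont r hr
  have hi1 := hcont.intervalIntegrable (μ := volume) 0 π
  have hi2 := hcont.intervalIntegrable (μ := volume) π (2*π)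
  have hsplit := intervalIntegral.integral_add_adjacent_intervals hi1 hi2
  have hrefl : (∫ θ in π..(2*π), (Real.sin θ:ℂ)^2 / (2*(Real.cos θ:ℂ) - (r + r⁻¹)))
      = ∫ θ in (0:ℝ)..π, (Real.sin θ:ℂ)^2 / (2*(Real.cos θ:ℂ) - (r + r⁻¹)) := by
    have hc := intervalIntegral.integral_comp_sub_left (a := (0:ℝ)) (b := π)
      (fun θ : ℝ => (Real.sin θ:ℂ)^2 / (2*(Real.cos θ:ℂ) - (r + r⁻¹))) (2*π)
    rw [show 2*π - π = π by ring, show 2*π - 0 = 2*π by ring] at hc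
    rw [← hc]
    apply intervalIntegral.integral_congr
    intro x _
    simp only [Real.sin_two_pi_sub, Real.cos_two_pi_sub, Complex.ofReal_neg, neg_sq]
  have hval := int_h r hr
  rw [← hsplit, hrefl] at hval
  linear_combination hval/2

/-- The Stieltjes transform of the semicircle law,
`m(z) = ∫_{-2}^{2} √(4-x²)/(2π (x - z)) dx`. -/
noncomputable def mSC (z : ℂ) : ℂ :=
  ∫ x in (-2 : ℝ)..2, (Real.sqrt (4 - x ^ 2) / (2 * Real.pi) : ℂ) / ((x : ℂ) - z)

lemma mSC_eq (r : ℂ) (hr : 1 < ‖r‖) : mSC (r + r⁻¹) = -r⁻¹ := by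
  have hr0 : r ≠ 0 := by intro h; rw [h] at hr; simp at hr; linarith
  have hπ : (π:ℂ) ≠ 0 := Complex.ofReal_ne_zero.2 Real.pi_ne_zero
  set g : ℝ → ℂ := fun x => (Real.sqrt (4 - x ^ 2) / (2 * Real.pi) : ℂ) / ((x : ℂ) - (r + r⁻¹))
    with hg
  have hgcont : ContinuousOn g ((fun θ : ℝ => 2 * Real.cos θ) '' Set.uIcc π 0) := by
    apply ContinuousOn.div
    · apply Continuous.continuousOn
      apply Continuous.div_const
      exact Complex.continuous_ofReal.comp (Real.continuous_sqrt.comp (by continuity))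
    · apply Continuous.continuousOn
      exact (Complex.continuous_ofReal).sub continuous_const
    · rintro x ⟨θ, -, rfl⟩
      have h := denom_ne r hr θ
      intro h0
      apply h
      rw [← h0]
      push_cast
      ring
  have hderiv : ∀ x ∈ Set.uIcc π 0,
      HasDerivAt (fun θ : ℝ => 2 * Real.cos θ) (-2 * Real.sin x) x := by
    intro x _
    have h := (Real.hasDerivAt_cos x).const_mul 2
    convert h using 1
    · rfl
    · rfl
    ring
  have hsub := intervalIntegral.integral_comp_smul_deriv' hderiv
    ((continuous_const.mul Real.continuous_sin).continuousOn) hgcont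
  simp only [Real.cos_pi, Real.cos_zero] at hsub
  rw [show (2:ℝ) * (-1) = -2 by ring, show (2:ℝ) * 1 = 2 by ring] at hsub
  have h1 : mSC (r + r⁻¹) = ∫ x in (π:ℝ)..0, (-2 * Real.sin x) • g (2 * Real.cos x) := by
    rw [mSC, ← hsub]
    rfl
  rw [h1, intervalIntegral.integral_symm]
  have h2 : ∀ x ∈ Set.uIcc (0:ℝ) π,
      (-2 * Real.sin x) • g (2 * Real.cos x)
        = (-(2/(π:ℂ))) * ((Real.sin x:ℂ)^2 / (2*(Real.cos x:ℂ) - (r + r⁻¹))) := by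
    intro x hx
    rw [Set.uIcc_of_le Real.pi_pos.le] at hx
    have hsx : 0 ≤ Real.sin x := Real.sin_nonneg_of_nonneg_of_le_pi hx.1 hx.2
    have hsq : Real.sqrt (4 - (2 * Real.cos x) ^ 2) = 2 * Real.sin x := by
      rw [show (4:ℝ) - (2 * Real.cos x)^2 = (2 * Real.sin x)^2 by
        have := Real.sin_sq_add_cos_sq x; nlinarith]
      exact Real.sqrt_sq (by linarith)
    rw [hg]
    simp only
    rw [hsq, Complex.real_smul]
    have hD := denom_ne r hr x
    push_cast at hD ⊢
    generalize hDD : (2:ℂ) * Complex.cos (x:ℂ) - (r + r⁻¹) = D at hD ⊢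
    field_simp
  rw [intervalIntegral.integral_congr h2, intervalIntegral.integral_const_mul,
    int_h_half r hr]
  field_simp

/-- For every `z` with `Im z ≠ 0`, `|m(z)| < 1`. -/
theorem abs_mSC_lt_one (z : ℂ) (hz : z.im ≠ 0) : ‖mSC z‖ < 1 := by
  obtain ⟨d, hd⟩ := IsAlgClosed.exists_pow_nat_eq (k := ℂ) (z^2 - 4) (n := 2) (by norm_num)
  set r1 : ℂ := (z + d)/2 with hr1
  set r2 : ℂ := (z - d)/2 with hr2
  have hprod : r1 * r2 = 1 := by
    rw [hr1, hr2]
    linear_combination (-1/4 : ℂ) * hd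
  have hsum : r1 + r2 = z := by rw [hr1, hr2]; ring
  have key : ∀ r : ℂ, 1 < ‖r‖ → r + r⁻¹ = z → ‖mSC z‖ < 1 := by
    intro r h hrz
    rw [← hrz, mSC_eq r h]
    rw [norm_neg, norm_inv]
    exact inv_lt_one_of_one_lt₀ h
  by_cases h1 : 1 < ‖r1‖
  · apply key r1 h1
    have h2 : r2 = r1⁻¹ := eq_inv_of_mul_eq_one_left (by rw [mul_comm]; exact hprod)
    rw [← h2]; exact hsum
  by_cases h2 : 1 < ‖r2‖
  · apply key r2 h2
    have h3 : r1 = r2⁻¹ := eq_inv_of_mul_eq_one_left hprod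
    rw [← h3, add_comm]; exact hsum
  exfalso
  push_neg at h1 h2
  have hn : ‖r1‖ * ‖r2‖ = 1 := by rw [← norm_mul, hprod, norm_one]
  have hpos1 : 0 ≤ ‖r1‖ := norm_nonneg _
  have hpos2 : 0 ≤ ‖r2‖ := norm_nonneg _
  have he1 : ‖r1‖ = 1 := by nlinarith
  have hr10 : r1 ≠ 0 := by
    intro h; rw [h, norm_zero] at he1; norm_num at he1
  have h2' : r2 = r1⁻¹ := eq_inv_of_mul_eq_one_left (by rw [mul_comm]; exact hprod)
  have hns : Complex.normSq r1 = 1 := by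
    rw [Complex.normSq_eq_norm_sq, he1]; norm_num
  apply hz
  rw [← hsum, Complex.add_im, h2', Complex.inv_im, hns]
  simp
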